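/- arXiv:2009.01045 — 2 statements merged into one kernel-verified Lean document; each statement's English description precedes it below -/
import Mathlib

section
/- Let G be a finite solvable group whose Fitting subgroup F = Fit(G) is a cyclic Hall subgroup of G. Then G has no normalizer covering. -/
open Subgroup

def IsNormCover {G : Type*} [Group G] (s : Finset (Subgroup G)) : Prop :=
  (∀ H ∈ s, ¬ H.Normal) ∧ ∀ g : G, ∃ H ∈ s, g ∈ normalizer (H : Set G)

/-- The Fitting subgroup: the join of all nilpotent normal subgroups. -/
def fittingSubgroup (G : Type*) [Group G] : Subgroup G :=
  ⨆ (H : Subgroup G) (_ : H.Normal ∧ Group.IsNilpotent H), H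

open scoped commutatorElement

section Aux
open Pointwise

variable {G : Type*} [Group G]

theorem NC.conj_pow_eq (g x : G) (n : ℕ) : (g * x * g⁻¹) ^ n = g * x ^ n * g⁻¹ := by
  induction n with
  | zero => simp
  | succ k ih => rw [pow_succ, pow_succ, ih]; group

theorem NC.conj_zpow_eq (g x : G) (k : ℤ) : (g * x * g⁻¹) ^ k = g * x ^ k * g⁻¹ := by
  have h := map_zpow (MulAut.conj g).toMonoidHom x k
  simpa [MulAut.conj_apply] using h.symm

theorem NC.fitting_le {K : Subgroup G} (h1 : K.Normal) (h2 : Group.IsNilpotent K) :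
    K ≤ fittingSubgroup G :=
  le_iSup₂ (f := fun (H : Subgroup G) (_ : H.Normal ∧ Group.IsNilpotent H) => H) K ⟨h1, h2⟩

instance NC.fitting_normal : (fittingSubgroup G).Normal := by
  constructor
  intro x hx g
  refine Subgroup.iSup_induction _ (C := fun y => g * y * g⁻¹ ∈ fittingSubgroup G) hx ?_ ?_ ?_
  · intro H z hz
    by_cases hp : H.Normal ∧ Group.IsNilpotent H
    · rw [iSup_pos hp] at hz
      exact NC.fitting_le hp.1 hp.2 (hp.1.conj_mem z hz g)
    · rw [iSup_neg hp] at hz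
      simp only [mem_bot] at hz
      simp [hz, one_mem]
  · simpa using (fittingSubgroup G).one_mem
  · intro a b ha hb
    have h : g * (a * b) * g⁻¹ = (g * a * g⁻¹) * (g * b * g⁻¹) := by group
    rw [h]; exact mul_mem ha hb

/-- An auxiliary derived chain of a subgroup. -/
def NC.dchain (K : Subgroup G) : ℕ → Subgroup G
  | 0 => K
  | n + 1 => ⁅NC.dchain K n, NC.dchain K n⁆

theorem NC.centralizer_fitting_le [Finite G] [Group.IsSolvable G]
    (hcyc : IsCyclic (fittingSubgroup G)) :
    centralizer (fittingSubgroup G : Set G) ≤ fittingSubgroup G := by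
  by_contra hnot
  set F := fittingSubgroup G with hF
  haveI hFnorm : F.Normal := NC.fitting_normal
  set C := centralizer (F : Set G) with hC
  have hFC : F ≤ C := by
    intro x hx
    rw [hC]
    rw [Subgroup.mem_centralizer_iff]
    intro f hf
    letI := hcyc.commGroup
    have h1 := mul_comm (⟨f, hf⟩ : F) (⟨x, hx⟩ : F)
    exact congrArg Subtype.val h1
  have hCnormal : C.Normal := by
    constructor
    intro z hz g
    rw [hC, Subgroup.mem_centralizer_iff]
    intro f hf
    have h1 : g⁻¹ * f * g ∈ F := by
      have := hFnorm.conj_mem f hf g⁻¹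
      rwa [inv_inv] at this
    have h2 : (g⁻¹ * f * g) * z = z * (g⁻¹ * f * g) :=
      Subgroup.mem_centralizer_iff.mp hz _ h1
    calc f * (g * z * g⁻¹) = g * ((g⁻¹ * f * g) * z) * g⁻¹ := by group
      _ = g * (z * (g⁻¹ * f * g)) * g⁻¹ := by rw [h2]
      _ = (g * z * g⁻¹) * f := by group
  haveI : Finite (Subgroup G) := Finite.of_injective (fun K => (K : Set G)) SetLike.coe_injective
  set S : Set (Subgroup G) := {K | K.Normal ∧ F < K ∧ K ≤ C} with hSdef
  have hCS : C ∈ S := ⟨hCnormal, lt_of_le_of_ne hFC (fun h => hnot (le_of_eq h.symm)), le_rfl⟩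
  obtain ⟨K, hKS, hKmin⟩ := (wellFounded_lt (α := Subgroup G)).has_min S ⟨C, hCS⟩
  obtain ⟨hKnorm, hFK, hKC⟩ := hKS
  have hAnorm : ∀ n, (NC.dchain K n).Normal := by
    intro n; induction n with
    | zero => exact hKnorm
    | succ k ih => exact @Subgroup.commutator_normal G _ _ _ ih ih
  have hAle : ∀ n, NC.dchain K n ≤ K := by
    intro n; induction n with
    | zero => exact le_rfl
    | succ k ih =>
      haveI := hAnorm k
      exact (Subgroup.commutator_le_right _ _).trans ih
  have hAder : ∀ n, NC.dchain K n ≤ derivedSeries G n := by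
    intro n; induction n with
    | zero => exact le_top
    | succ k ih => rw [derivedSeries_succ]; exact Subgroup.commutator_mono ih ih
  obtain ⟨N, hNder⟩ := Group.IsSolvable.solvable (G := G)
  have hANbot : NC.dchain K N = ⊥ := le_bot_iff.mp (hNder ▸ hAder N)
  have hne : ∃ n, NC.dchain K n ⊔ F ≠ K := by
    refine ⟨N, ?_⟩
    rw [hANbot, bot_sup_eq]
    exact ne_of_lt hFK
  classical
  have hn₀ : NC.dchain K (Nat.find hne) ⊔ F ≠ K := Nat.find_spec hne
  have hn₀pos : Nat.find hne ≠ 0 := by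
    intro h0
    apply hn₀
    rw [h0]
    show NC.dchain K 0 ⊔ F = K
    exact sup_eq_left.mpr hFK.le
  obtain ⟨m, hm⟩ := Nat.exists_eq_succ_of_ne_zero hn₀pos
  have hLm : NC.dchain K m ⊔ F = K := not_not.mp (Nat.find_min hne (by omega))
  have hsuccle : NC.dchain K (m + 1) ≤ F := by
    haveI := hAnorm (m + 1)
    have hLnorm : (NC.dchain K (m + 1) ⊔ F).Normal := Subgroup.sup_normal _ _
    have hLC : NC.dchain K (m + 1) ⊔ F ≤ C := sup_le ((hAle _).trans hKC) hFC
    have hLK : NC.dchain K (m + 1) ⊔ F ≤ K := sup_le (hAle _) hFK.le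
    have hLne : NC.dchain K (m + 1) ⊔ F ≠ K := by
      have h' := hn₀
      rw [hm] at h'
      exact h'
    by_contra hc
    have hFlt : F < NC.dchain K (m + 1) ⊔ F :=
      lt_of_le_of_ne le_sup_right (fun e => hc (le_sup_left.trans e.symm.le))
    exact hKmin _ ⟨hLnorm, hFlt, hLC⟩ (lt_of_le_of_ne hLK hLne)
  have hKcommF : ∀ x ∈ K, ∀ y ∈ K, ⁅x, y⁆ ∈ F := by
    intro x hx y hy
    haveI := hAnorm m
    rw [← hLm] at hx hy
    have hx' : x ∈ (NC.dchain K m : Set G) * (F : Set G) := by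
      rw [← Subgroup.mul_normal]; exact hx
    obtain ⟨a, ha, f, hf, hx2⟩ := hx'
    have hy' : y ∈ (NC.dchain K m : Set G) * (F : Set G) := by
      rw [← Subgroup.mul_normal]; exact hy
    obtain ⟨b, hb, e, he, hy2⟩ := hy'
    have hxa : (QuotientGroup.mk x : G ⧸ F) = QuotientGroup.mk a := by
      rw [← hx2, QuotientGroup.mk_mul, (QuotientGroup.eq_one_iff f).mpr hf, mul_one]
    have hyb : (QuotientGroup.mk y : G ⧸ F) = QuotientGroup.mk b := by
      rw [← hy2, QuotientGroup.mk_mul, (QuotientGroup.eq_one_iff e).mpr he, mul_one]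
    have hmk : (QuotientGroup.mk ⁅x, y⁆ : G ⧸ F) = 1 := by
      calc (QuotientGroup.mk ⁅x, y⁆ : G ⧸ F)
          = ⁅(QuotientGroup.mk x : G ⧸ F), (QuotientGroup.mk y : G ⧸ F)⁆ :=
            map_commutatorElement (QuotientGroup.mk' F) x y
        _ = ⁅(QuotientGroup.mk a : G ⧸ F), (QuotientGroup.mk b : G ⧸ F)⁆ := by rw [hxa, hyb]
        _ = QuotientGroup.mk ⁅a, b⁆ := (map_commutatorElement (QuotientGroup.mk' F) a b).symm
        _ = 1 := (QuotientGroup.eq_one_iff _).mpr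
            (hsuccle (Subgroup.commutator_mem_commutator ha hb))
    exact (QuotientGroup.eq_one_iff _).mp hmk
  have hKnil : Group.IsNilpotent K := by
    rw [_root_.nilpotent_iff_lowerCentralSeries]
    refine ⟨2, Subgroup.lowerCentralSeries_succ_eq_bot ⊤ ?_⟩
    rw [Subgroup.top_lowerCentralSeries_one]
    show ⁅(⊤ : Subgroup K), (⊤ : Subgroup K)⁆ ≤ Subgroup.center K
    rw [Subgroup.commutator_le]
    intro p _ q _
    rw [Subgroup.mem_center_iff]
    intro z
    have h1 : ⁅(p : G), (q : G)⁆ ∈ F := hKcommF _ p.2 _ q.2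
    have h2 : (z : G) ∈ C := hKC z.2
    have h3 : (⁅(p : G), (q : G)⁆) * (z : G) = (z : G) * ⁅(p : G), (q : G)⁆ :=
      Subgroup.mem_centralizer_iff.mp h2 _ h1
    have hcoe : ((⁅p, q⁆ : K) : G) = ⁅(p : G), (q : G)⁆ := rfl
    apply Subtype.ext
    show ((z : G) * _) = (_ * (z : G))
    rw [hcoe]
    exact h3.symm
  exact absurd (NC.fitting_le hKnorm hKnil) hFK.not_ge

theorem NC.commutator_mem_fitting [Finite G] [Group.IsSolvable G] {t : G}
    (hFt : fittingSubgroup G = zpowers t)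
    (hcyc : IsCyclic (fittingSubgroup G)) (x y : G) :
    ⁅x, y⁆ ∈ fittingSubgroup G := by
  apply NC.centralizer_fitting_le hcyc
  rw [Subgroup.mem_centralizer_iff]
  intro f hf
  obtain ⟨k, hk⟩ := mem_zpowers_iff.mp (show f ∈ zpowers t by rw [← hFt]; exact hf)
  have hconj : ∀ a : G, ∃ i : ℤ, a * t * a⁻¹ = t ^ i := by
    intro a
    have h1 : a * t * a⁻¹ ∈ fittingSubgroup G :=
      NC.fitting_normal.conj_mem t (by rw [hFt]; exact mem_zpowers t) a
    rw [hFt] at h1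
    obtain ⟨i, hi⟩ := mem_zpowers_iff.mp h1
    exact ⟨i, hi.symm⟩
  have hkey : ∀ a b : G, (a * b) * t * (a * b)⁻¹ = (b * a) * t * (b * a)⁻¹ := by
    intro a b
    obtain ⟨i, hi⟩ := hconj a
    obtain ⟨j, hj⟩ := hconj b
    calc (a * b) * t * (a * b)⁻¹ = a * (b * t * b⁻¹) * a⁻¹ := by group
      _ = a * t ^ j * a⁻¹ := by rw [hj]
      _ = (a * t * a⁻¹) ^ j := (NC.conj_zpow_eq a t j).symm
      _ = (t ^ i) ^ j := by rw [hi]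
      _ = t ^ (i * j) := by rw [← zpow_mul]
      _ = (t ^ j) ^ i := by rw [← zpow_mul, mul_comm]
      _ = (b * t * b⁻¹) ^ i := by rw [hj]
      _ = b * (t ^ i) * b⁻¹ := NC.conj_zpow_eq b t i
      _ = b * (a * t * a⁻¹) * b⁻¹ := by rw [hi]
      _ = (b * a) * t * (b * a)⁻¹ := by group
  have ht : t * ⁅x, y⁆ = ⁅x, y⁆ * t := by
    have E := hkey x⁻¹ y⁻¹
    have h5 : ⁅x, y⁆ * t * ⁅x, y⁆⁻¹ = t := by
      rw [commutatorElement_def]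
      calc (x * y * x⁻¹ * y⁻¹) * t * (x * y * x⁻¹ * y⁻¹)⁻¹
          = (x * y) * ((x⁻¹ * y⁻¹) * t * (x⁻¹ * y⁻¹)⁻¹) * (x * y)⁻¹ := by group
        _ = (x * y) * ((y⁻¹ * x⁻¹) * t * (y⁻¹ * x⁻¹)⁻¹) * (x * y)⁻¹ := by rw [E]
        _ = t := by group
    calc t * ⁅x, y⁆ = (⁅x, y⁆ * t * ⁅x, y⁆⁻¹) * ⁅x, y⁆ := by rw [h5]
      _ = ⁅x, y⁆ * t := by group
  have hcommute : Commute t ⁅x, y⁆ := ht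
  rw [← hk]
  exact (hcommute.zpow_left k).eq

theorem NC.key_normal [Finite G] {F H : Subgroup G} [F.Normal]
    (hcycF : IsCyclic F)
    (hcop : Nat.Coprime (Nat.card F) F.index)
    (hcomm : ∀ x y : G, ⁅x, y⁆ ∈ F)
    (hN : F ≤ normalizer (H : Set G)) : H.Normal := by
  classical
  have hconj : ∀ f ∈ F, ∀ h ∈ H, f * h * f⁻¹ ∈ H := by
    intro f hf h hh
    exact (Subgroup.mem_normalizer_iff.mp (hN hf) h).mp hh
  set D : Subgroup G := H ⊓ F with hDdef
  have hDle : D ≤ F := inf_le_right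
  have hDH : D ≤ H := inf_le_left
  have hFnormal : F.Normal := inferInstance
  have hDF : ∀ f ∈ F, ∀ h ∈ H, ⁅f, h⁆ ∈ D := by
    intro f hf h hh
    rw [hDdef, mem_inf]
    constructor
    · have e : ⁅f, h⁆ = (f * h * f⁻¹) * h⁻¹ := by rw [commutatorElement_def]
      rw [e]
      exact mul_mem (hconj f hf h hh) (inv_mem hh)
    · have e : ⁅f, h⁆ = f * (h * f⁻¹ * h⁻¹) := by rw [commutatorElement_def]; group
      rw [e]
      exact mul_mem hf (hFnormal.conj_mem f⁻¹ (inv_mem hf) h)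
  haveI : Fintype F := Fintype.ofFinite _
  set d : ℕ := Nat.card D with hd
  have hdpos : 0 < d := Nat.card_pos
  have hclaim : ∀ y : G, y ∈ F → y ^ d = 1 → y ∈ D := by
    intro y hyF hyd
    set D' : Subgroup F := D.subgroupOf F with hD'
    have hcardD' : Nat.card D' = d := by
      rw [hd]; exact Nat.card_congr (Subgroup.subgroupOfEquivOfLe hDle).toEquiv
    set S : Finset F := Finset.univ.filter (fun a : F => a ^ d = 1) with hS
    set T : Finset F := Finset.univ.filter (fun a : F => a ∈ D') with hT
    have hTS : T ⊆ S := by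
      intro a ha
      rw [hT, Finset.mem_filter] at ha
      rw [hS, Finset.mem_filter]
      refine ⟨Finset.mem_univ _, ?_⟩
      have h1 : (⟨a, ha.2⟩ : D') ^ Nat.card D' = 1 := pow_card_eq_one'
      rw [hcardD'] at h1
      simpa using congrArg Subtype.val h1
    have hScard : S.card ≤ d := IsCyclic.card_pow_eq_one_le hdpos
    have hTcard : T.card = d := by
      rw [hT, ← hcardD', Nat.card_eq_fintype_card]
      exact (Fintype.card_subtype _).symm
    have hST : T = S := Finset.eq_of_subset_of_card_le hTS (hScard.trans_eq hTcard.symm)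
    have hyS : (⟨y, hyF⟩ : F) ∈ S := by
      rw [hS, Finset.mem_filter]
      exact ⟨Finset.mem_univ _, Subtype.ext (by simpa using hyd)⟩
    rw [← hST, hT, Finset.mem_filter] at hyS
    exact (Subgroup.mem_subgroupOf).mp hyS.2
  have hDnormal : D.Normal := by
    constructor
    intro x hx g
    refine hclaim _ (hFnormal.conj_mem x (hDle hx) g) ?_
    have hxd : x ^ d = 1 := by
      have h1 : (⟨x, hx⟩ : D) ^ d = 1 := by rw [hd]; exact pow_card_eq_one'
      have h2 : ((⟨x, hx⟩ : D) ^ d : G) = ((1 : D) : G) := congrArg Subtype.val h1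
      simp only [SubmonoidClass.coe_pow, OneMemClass.coe_one] at h2
      exact h2
    rw [NC.conj_pow_eq, hxd]
    simp
  constructor
  intro h hh g
  set n : ℕ := orderOf h with hn
  set n1 : ℕ := n.gcd (Nat.card F) with hn1
  set n2 : ℕ := n.gcd F.index with hn2
  have hcop12 : Nat.Coprime n1 n2 :=
    Nat.Coprime.coprime_dvd_left (Nat.gcd_dvd_right n _)
      (Nat.Coprime.coprime_dvd_right (Nat.gcd_dvd_right n _) hcop)
  have hndvd : n ∣ n1 * n2 := by
    have h1 : n ∣ Nat.card F * F.index := by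
      rw [Subgroup.card_mul_index]; exact orderOf_dvd_natCard h
    have e : n1 * n2 = Nat.gcd (n * n2) (Nat.card F * n2) :=
      (Nat.gcd_mul_right n n2 (Nat.card F)).symm
    rw [e]
    refine Nat.dvd_gcd (dvd_mul_right n n2) ?_
    have e2 : Nat.card F * n2 = Nat.gcd (Nat.card F * n) (Nat.card F * F.index) :=
      (Nat.gcd_mul_left (Nat.card F) n F.index).symm
    rw [e2]
    exact Nat.dvd_gcd (dvd_mul_left n (Nat.card F)) h1
  have hpow : h ^ (n1 * n2) = 1 := orderOf_dvd_iff_pow_eq_one.mp hndvd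
  obtain ⟨A, B, hAB⟩ : ∃ a b : ℤ, (n1 : ℤ) * a + (n2 : ℤ) * b = 1 := by
    refine ⟨Nat.gcdA n1 n2, Nat.gcdB n1 n2, ?_⟩
    have hg := Nat.gcd_eq_gcd_ab n1 n2
    rw [hcop12] at hg
    exact_mod_cast hg.symm
  set u : G := h ^ ((n2 : ℤ) * B) with hu
  set v : G := h ^ ((n1 : ℤ) * A) with hv
  have huv : h = u * v := by
    rw [hu, hv, ← zpow_add]
    rw [show (n2 : ℤ) * B + (n1 : ℤ) * A = 1 by linarith [hAB]]
    exact (zpow_one h).symm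
  have hu1 : u ^ n1 = 1 := by
    rw [hu, ← zpow_natCast, ← zpow_mul]
    rw [show (n2 : ℤ) * B * (n1 : ℕ) = ((n1 * n2 : ℕ) : ℤ) * B by push_cast; ring]
    rw [zpow_mul, zpow_natCast, hpow, one_zpow]
  have hv2 : v ^ n2 = 1 := by
    rw [hv, ← zpow_natCast, ← zpow_mul]
    rw [show (n1 : ℤ) * A * (n2 : ℕ) = ((n1 * n2 : ℕ) : ℤ) * A by push_cast; ring]
    rw [zpow_mul, zpow_natCast, hpow, one_zpow]
  have huF : u ∈ F := by
    have hou : orderOf u ∣ n1 := orderOf_dvd_iff_pow_eq_one.mpr hu1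
    have h1 : orderOf ((QuotientGroup.mk u : G ⧸ F)) ∣ Nat.card F :=
      ((orderOf_map_dvd (QuotientGroup.mk' F) u).trans hou).trans (Nat.gcd_dvd_right n _)
    have h2 : orderOf ((QuotientGroup.mk u : G ⧸ F)) ∣ F.index :=
      orderOf_dvd_natCard (QuotientGroup.mk u : G ⧸ F)
    have h3 : orderOf ((QuotientGroup.mk u : G ⧸ F)) = 1 := by
      have h4 : orderOf ((QuotientGroup.mk u : G ⧸ F)) ∣ 1 := hcop ▸ Nat.dvd_gcd h1 h2
      exact Nat.dvd_one.mp h4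
    exact (QuotientGroup.eq_one_iff u).mp (orderOf_eq_one_iff.mp h3)
  have huH : u ∈ H := by rw [hu]; exact zpow_mem hh _
  have hvH : v ∈ H := by rw [hv]; exact zpow_mem hh _
  have huD : u ∈ D := mem_inf.mpr ⟨huH, huF⟩
  set c : G := ⁅g, v⁆ with hc
  have hcF : c ∈ F := hcomm g v
  have hgv : g * v * g⁻¹ = c * v := by rw [hc, commutatorElement_def]; group
  haveI := hDnormal
  set π : G →* G ⧸ D := QuotientGroup.mk' D with hπ
  have hcvD : ⁅c, v⁆ ∈ D := hDF c hcF v hvH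
  have hcomm2 : Commute (π c) (π v) := by
    rw [← commutatorElement_eq_one_iff_commute, ← map_commutatorElement]
    exact (QuotientGroup.eq_one_iff _).mpr hcvD
  set m : ℕ := orderOf v with hm
  have hπc : (π c) ^ m = 1 := by
    have e1 : (π c * π v) ^ m = (π c) ^ m * (π v) ^ m := hcomm2.mul_pow m
    have e2 : (π v) ^ m = 1 := by rw [← map_pow, hm, pow_orderOf_eq_one, map_one]
    have e3 : (π c * π v) ^ m = 1 := by
      rw [← map_mul, ← hgv, ← map_pow]
      have e4 : (g * v * g⁻¹) ^ m = 1 := by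
        rw [NC.conj_pow_eq, hm, pow_orderOf_eq_one]
        simp
      rw [e4, map_one]
    rw [e1, e2, mul_one] at e3
    exact e3
  have hcD : c ∈ D := by
    have h1 : orderOf (π c) ∣ m := orderOf_dvd_iff_pow_eq_one.mpr hπc
    have h2 : orderOf (π c) ∣ Nat.card F :=
      (orderOf_map_dvd π c).trans (Subgroup.orderOf_dvd_natCard F hcF)
    have h3 : m ∣ F.index :=
      (orderOf_dvd_iff_pow_eq_one.mpr hv2).trans (Nat.gcd_dvd_right n _)
    have h4 : orderOf (π c) ∣ 1 := hcop ▸ Nat.dvd_gcd h2 (h1.trans h3)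
    exact (QuotientGroup.eq_one_iff c).mp (orderOf_eq_one_iff.mp (Nat.dvd_one.mp h4))
  have hgvH : g * v * g⁻¹ ∈ H := by rw [hgv]; exact mul_mem (hDH hcD) hvH
  have hguH : g * u * g⁻¹ ∈ H := hDH (hDnormal.conj_mem u huD g)
  have hsplit : g * h * g⁻¹ = (g * u * g⁻¹) * (g * v * g⁻¹) := by rw [huv]; group
  rw [hsplit]
  exact mul_mem hguH hgvH

end Aux

theorem stmt5 {G : Type*} [Group G] [Finite G] [Group.IsSolvable G]
    (hcyc : IsCyclic (fittingSubgroup G))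
    (hhall : Nat.Coprime (Nat.card (fittingSubgroup G)) (fittingSubgroup G).index) :
    ¬ ∃ s : Finset (Subgroup G), IsNormCover s := by
  rintro ⟨s, hns, hcov⟩
  obtain ⟨g0, hg0⟩ := hcyc.exists_generator
  have hFt : fittingSubgroup G = zpowers (g0 : G) := by
    apply le_antisymm
    · intro x hx
      obtain ⟨k, hk⟩ := mem_zpowers_iff.mp (hg0 ⟨x, hx⟩)
      refine mem_zpowers_iff.mpr ⟨k, ?_⟩
      have h1 := congrArg Subtype.val hk
      simpa using h1
    · exact zpowers_le.mpr g0.2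
  obtain ⟨H, hHs, hHt⟩ := hcov (g0 : G)
  have hFN : fittingSubgroup G ≤ normalizer (H : Set G) := by
    rw [hFt]; exact zpowers_le.mpr hHt
  have hcommF : ∀ x y : G, ⁅x, y⁆ ∈ fittingSubgroup G :=
    NC.commutator_mem_fitting hFt hcyc
  exact hns H hHs (NC.key_normal hcyc hhall hcommF hFN)
end

section
/- Let G be a non-abelian finite p-group with a normalizer covering. Then for every element u ∈ G there exists a subgroup H of G such that u ∈ N_G(H) and N_G(H) is a maximal subgroup of G. -/
open Subgroup

namespace NormCoverAux

variable {G : Type*} [Group G]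

/-- A subgroup of prime index is a coatom. -/
lemma isCoatom_of_index_prime {p : ℕ} (hp : p.Prime) {C : Subgroup G}
    (h : C.index = p) : IsCoatom C := by
  constructor
  · intro htop
    rw [htop, Subgroup.index_top] at h
    exact hp.one_lt.ne h
  · intro B hB
    have h1 : C.relIndex B * B.index = C.index := Subgroup.relIndex_mul_index hB.le
    rw [h] at h1
    have hd : B.index ∣ p := Dvd.intro_left _ h1
    rcases hp.eq_one_or_self_of_dvd _ hd with h2 | h2
    · exact Subgroup.index_eq_one.mp h2
    · exfalso
      rw [h2] at h1
      have h3 : C.relIndex B = 1 :=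
        Nat.eq_of_mul_eq_mul_right hp.pos (h1.trans (one_mul p).symm)
      exact hB.not_ge (Subgroup.relIndex_eq_one.mp h3)

lemma map_mem_normalizer {G' : Type*} [Group G'] (f : G →* G') {K : Subgroup G}
    {g : G} (hg : g ∈ normalizer (K : Set G)) : f g ∈ normalizer ((K.map f : Subgroup G') : Set G') := by
  rw [Subgroup.mem_normalizer_iff] at hg ⊢
  intro b
  constructor
  · rintro ⟨h, hh, rfl⟩
    refine ⟨g * h * g⁻¹, (hg h).mp hh, by simp [map_mul, map_inv]⟩
  · rintro ⟨h, hh, heq⟩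
    have hb : b = f (g⁻¹ * h * g) := by
      have : f h = f g * b * (f g)⁻¹ := heq
      rw [map_mul, map_mul, map_inv, this]
      group
    refine ⟨g⁻¹ * h * g, ?_, hb.symm⟩
    have := (hg (g⁻¹ * h * g)).mpr
    apply this
    have : g * (g⁻¹ * h * g) * g⁻¹ = h := by group
    rw [this]
    exact hh

lemma normalizer_comap_surj {G' : Type*} [Group G'] {f : G →* G'}
    (hf : Function.Surjective f) (K : Subgroup G') :
    normalizer ((K.comap f : Subgroup G) : Set G) = (normalizer (K : Set G')).comap f := by
  ext g
  simp only [Subgroup.mem_comap, Subgroup.mem_normalizer_iff]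
  constructor
  · intro h b
    obtain ⟨x, rfl⟩ := hf b
    have := h x
    rw [map_mul, map_mul, map_inv] at this
    exact this
  · intro h x
    have := h (f x)
    rw [map_mul, map_mul, map_inv]
    exact this

lemma isCoatom_comap {G' : Type*} [Group G'] {f : G →* G'}
    (hf : Function.Surjective f) {M : Subgroup G'} (hM : IsCoatom M) :
    IsCoatom (M.comap f) := by
  constructor
  · intro h
    apply hM.1
    rw [← Subgroup.map_comap_eq_self_of_surjective hf M, h,
      Subgroup.map_top_of_surjective f hf]
  · intro B hB
    have hker : f.ker ≤ B := by
      refine le_trans ?_ hB.le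
      intro x hx
      simp only [Subgroup.mem_comap]
      rw [MonoidHom.mem_ker] at hx
      rw [hx]
      exact M.one_mem
    have hB2 : B = (B.map f).comap f := by
      rw [Subgroup.comap_map_eq]
      exact (sup_eq_left.mpr hker).symm
    have hMB : M ≤ B.map f := by
      conv_lhs => rw [← Subgroup.map_comap_eq_self_of_surjective hf M]
      exact Subgroup.map_mono hB.le
    have hne : B.map f ≠ M := by
      intro h
      apply hB.ne'
      rw [hB2, h]
    have htop := hM.2 (B.map f) (lt_of_le_of_ne hMB (Ne.symm hne))
    rw [hB2, htop, Subgroup.comap_top]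

/-- Conjugation by a `p`-power-order element normalizing both `K` and `L`, with
`K ≤ L` of prime relative index and `L` "abelian", acts trivially on `L/K`. -/
lemma conj_mem_of_relIndex_prime [Finite G] {p : ℕ} (hp : p.Prime) {K L : Subgroup G}
    (hKL : K ≤ L) (habel : ∀ x ∈ L, ∀ y ∈ L, x * y = y * x)
    (hrel : K.relIndex L = p) {g : G} {k : ℕ} (hgpow : g ^ p ^ k = 1)
    (hgK : g ∈ normalizer (K : Set G)) (hgL : g ∈ normalizer (L : Set G)) :
    ∀ x ∈ L, x⁻¹ * (g * x * g⁻¹) ∈ K := by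
  haveI : Fact p.Prime := ⟨hp⟩
  set K' : Subgroup ↥L := K.subgroupOf L with hK'def
  haveI hK'n : K'.Normal := by
    constructor
    intro n hn g'
    rw [Subgroup.mem_subgroupOf] at hn ⊢
    have hcomm : (g' : G) * (n : G) = (n : G) * (g' : G) := by
      have hxn := habel _ g'.2 _ (hKL hn)
      exact hxn
    show ((g' : G) * n * (g' : G)⁻¹ : G) ∈ K
    rw [hcomm]
    simpa using hn
  have hcard : Nat.card (↥L ⧸ K') = p := hrel
  haveI : IsCyclic (↥L ⧸ K') := isCyclic_of_prime_card hcard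
  obtain ⟨t, ht⟩ := IsCyclic.exists_generator (α := ↥L ⧸ K')
  have hordt : orderOf t = p := by
    rw [orderOf_eq_card_of_forall_mem_zpowers ht, hcard]
  -- conjugation homomorphism on L
  have hmemL : ∀ (m : ℕ) (x : ↥L), g ^ m * (x : G) * (g ^ m)⁻¹ ∈ L := fun m x =>
    (Subgroup.mem_normalizer_iff.mp (pow_mem hgL m) (x : G)).mp x.2
  have hmemL1 : ∀ x : ↥L, g * (x : G) * g⁻¹ ∈ L := fun x => by
    simpa using hmemL 1 x
  set φ : ↥L →* ↥L :=
    { toFun := fun x => ⟨g * (x : G) * g⁻¹, hmemL1 x⟩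
      map_one' := by ext; simp
      map_mul' := by intro a b; ext; push_cast; group } with hφdef
  have hφker : ∀ x : ↥L, x ∈ K' → ((QuotientGroup.mk' K').comp φ) x = 1 := by
    intro x hx
    rw [Subgroup.mem_subgroupOf] at hx
    simp only [MonoidHom.comp_apply, QuotientGroup.mk'_apply]
    rw [QuotientGroup.eq_one_iff]
    rw [Subgroup.mem_subgroupOf]
    exact (Subgroup.mem_normalizer_iff.mp hgK (x : G)).mp hx
  set σ : ↥L ⧸ K' →* ↥L ⧸ K' := QuotientGroup.lift K' ((QuotientGroup.mk' K').comp φ) hφker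
    with hσdef
  have hσmk : ∀ x : ↥L, σ (QuotientGroup.mk x) = QuotientGroup.mk (φ x) := fun x => rfl
  -- σ t = t ^ a
  obtain ⟨a, ha⟩ : ∃ a : ℕ, σ t = t ^ a := by
    have h1 : σ t ∈ Subgroup.zpowers t := ht (σ t)
    rw [← mem_powers_iff_mem_zpowers] at h1
    obtain ⟨a, ha⟩ := h1
    exact ⟨a, ha.symm⟩
  -- iterates
  obtain ⟨t₀, ht₀⟩ := QuotientGroup.mk'_surjective K' t
  have hiter : ∀ m : ℕ, (QuotientGroup.mk (⟨g ^ m * (t₀ : G) * (g ^ m)⁻¹, hmemL m t₀⟩ : ↥L)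
      : ↥L ⧸ K') = t ^ a ^ m := by
    intro m
    induction m with
    | zero =>
      simp only [pow_zero, pow_one]
      rw [← ht₀]
      congr 1
      ext
      simp
    | succ m ih =>
      have hstep : (⟨g ^ (m + 1) * (t₀ : G) * (g ^ (m + 1))⁻¹, hmemL (m + 1) t₀⟩ : ↥L)
          = φ ⟨g ^ m * (t₀ : G) * (g ^ m)⁻¹, hmemL m t₀⟩ := by
        ext
        show g ^ (m + 1) * (t₀ : G) * (g ^ (m + 1))⁻¹
          = g * (g ^ m * (t₀ : G) * (g ^ m)⁻¹) * g⁻¹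
        rw [pow_succ']
        group
      rw [hstep, ← hσmk, ih, map_pow, ha, ← pow_mul, ← pow_succ']
  have hfix : t = t ^ a ^ p ^ k := by
    have hthis := hiter (p ^ k)
    have he : (⟨g ^ p ^ k * (t₀ : G) * (g ^ p ^ k)⁻¹, hmemL (p ^ k) t₀⟩ : ↥L) = t₀ := by
      ext
      show g ^ p ^ k * (t₀ : G) * (g ^ p ^ k)⁻¹ = (t₀ : G)
      rw [hgpow]
      simp
    rw [he] at hthis
    calc t = QuotientGroup.mk t₀ := ht₀.symm
      _ = t ^ a ^ p ^ k := hthis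
  -- deduce a ≡ 1 [MOD p]
  have hmod : 1 ≡ a ^ p ^ k [MOD orderOf t] := by
    rw [← pow_eq_pow_iff_modEq, pow_one]
    exact hfix
  rw [hordt] at hmod
  have hZ : ((a : ZMod p)) ^ p ^ k = 1 := by
    have := (ZMod.natCast_eq_natCast_iff _ _ _).mpr hmod
    push_cast at this
    rw [← this]
  have hfrob : ∀ (x : ZMod p) (j : ℕ), x ^ p ^ j = x := by
    intro x j
    induction j with
    | zero => simp
    | succ j ih => rw [pow_succ, pow_mul, ih, ZMod.pow_card]
  have haone : (a : ZMod p) = 1 := by rw [← hfrob (a : ZMod p) k, hZ]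
  have hamod : a ≡ 1 [MOD p] := by
    have := (ZMod.natCast_eq_natCast_iff a 1 p).mp (by push_cast; exact haone)
    exact this
  have hσt : σ t = t := by
    rw [ha, ← pow_one t, ← pow_mul, one_mul, pow_eq_pow_iff_modEq, hordt]
    exact hamod
  have hσid : ∀ q : ↥L ⧸ K', σ q = q := by
    intro q
    obtain ⟨m, hm⟩ := ht q
    rw [← hm, map_zpow, hσt]
  intro x hx
  have := hσid (QuotientGroup.mk (⟨x, hx⟩ : ↥L))
  rw [hσmk] at this
  have h2 := QuotientGroup.eq.mp this.symm
  rw [Subgroup.mem_subgroupOf] at h2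
  simpa [hφdef] using h2

end NormCoverAux

namespace NormCoverAux

set_option maxHeartbeats 1000000 in
/-- The key fixed-point lemma. -/
lemma exists_almost_fixed {G : Type*} [Group G] [Finite G] {p : ℕ} (hp : p.Prime)
    (hpG : IsPGroup p G) {T E : Subgroup G} (hT : T.Normal) (hE : E.Normal)
    (hTE : ¬ T ≤ E) :
    ∃ x₀ : G, x₀ ∈ T ∧ x₀ ∉ E ∧ ∀ g : G, x₀⁻¹ * (g * x₀ * g⁻¹) ∈ E ⊓ T := by
  haveI : Fact p.Prime := ⟨hp⟩
  haveI := hT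
  have hETn : (E ⊓ T).Normal := by
    constructor
    intro n hn g
    rw [Subgroup.mem_inf] at hn ⊢
    exact ⟨hE.conj_mem n hn.1 g, hT.conj_mem n hn.2 g⟩
  obtain ⟨A, hAdef⟩ : ∃ A : Subgroup ↥T, A = (E ⊓ T).subgroupOf T := ⟨_, rfl⟩
  haveI hAn : A.Normal := by
    constructor
    intro n hn g'
    rw [hAdef, Subgroup.mem_subgroupOf] at hn ⊢
    show ((g' : G) * n * (g' : G)⁻¹ : G) ∈ E ⊓ T
    exact hETn.conj_mem _ hn _
  have hle : ∀ g : G, A ≤ A.comap (MulAut.conjNormal g).toMonoidHom := by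
    intro g x hx
    simp only [Subgroup.mem_comap]
    rw [hAdef, Subgroup.mem_subgroupOf] at hx ⊢
    simpa using hETn.conj_mem _ hx g
  set f : G → (↥T ⧸ A) →* (↥T ⧸ A) :=
    fun g => QuotientGroup.map A A (MulAut.conjNormal g).toMonoidHom (hle g) with hfdef
  have hf_mk : ∀ (g : G) (z : ↥T),
      f g (QuotientGroup.mk z) = QuotientGroup.mk (MulAut.conjNormal g z) :=
    fun g z => rfl
  letI act : MulAction G (↥T ⧸ A) :=
    { smul := fun g q => f g q
      one_smul := by
        intro q
        induction q using QuotientGroup.induction_on with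
        | _ z =>
          show f 1 (QuotientGroup.mk z) = QuotientGroup.mk z
          rw [hf_mk]
          refine congrArg QuotientGroup.mk (Subtype.ext ?_)
          show ((MulAut.conjNormal (1 : G)) z : G) = (z : G)
          rw [MulAut.conjNormal_apply]
          simp
      mul_smul := by
        intro g₁ g₂ q
        induction q using QuotientGroup.induction_on with
        | _ z =>
          show f (g₁ * g₂) (QuotientGroup.mk z) = f g₁ (f g₂ (QuotientGroup.mk z))
          rw [hf_mk, hf_mk, hf_mk]
          refine congrArg QuotientGroup.mk (Subtype.ext ?_)
          show ((MulAut.conjNormal (g₁ * g₂)) z : G)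
            = ((MulAut.conjNormal g₁) ((MulAut.conjNormal g₂) z) : G)
          rw [MulAut.conjNormal_apply, MulAut.conjNormal_apply, MulAut.conjNormal_apply]
          group }
  have hsmul_mk : ∀ (g : G) (z : ↥T),
      g • (QuotientGroup.mk z : ↥T ⧸ A) = QuotientGroup.mk (MulAut.conjNormal g z) := hf_mk
  have hQdvd : p ∣ Nat.card (↥T ⧸ A) := by
    have h1 : Nat.card (↥T ⧸ A) ∣ Nat.card ↥T := by
      have : Nat.card (↥T ⧸ A) = A.index := rfl
      rw [this]
      exact Subgroup.index_dvd_card (G := ↥T) A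
    obtain ⟨m, hm⟩ := IsPGroup.iff_card.mp (hpG.to_subgroup T)
    rw [hm] at h1
    obtain ⟨j, _, hj2⟩ := (Nat.dvd_prime_pow hp).mp h1
    have hj : j ≠ 0 := by
      intro h0
      rw [h0, pow_zero] at hj2
      have hA1 : A.index = 1 := hj2
      have := Subgroup.index_eq_one.mp hA1
      rw [hAdef, Subgroup.subgroupOf_eq_top] at this
      exact hTE (le_trans this inf_le_left)
    rw [hj2]
    exact dvd_pow_self p hj
  have hmod := hpG.card_modEq_card_fixedPoints (↥T ⧸ A)
  have hFdvd : p ∣ Nat.card (MulAction.fixedPoints G (↥T ⧸ A)) := by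
    have h0 : Nat.card (↥T ⧸ A) ≡ 0 [MOD p] := (Nat.modEq_zero_iff_dvd).mpr hQdvd
    exact (Nat.modEq_zero_iff_dvd).mp (hmod.symm.trans h0)
  have h1F : (1 : ↥T ⧸ A) ∈ MulAction.fixedPoints G (↥T ⧸ A) := by
    intro g
    have : (1 : ↥T ⧸ A) = QuotientGroup.mk 1 := rfl
    rw [this, hsmul_mk]
    congr 1
    ext
    simp
  haveI : Finite ↥(MulAction.fixedPoints G (↥T ⧸ A)) := Subtype.finite
  have hpos : 0 < Nat.card ↥(MulAction.fixedPoints G (↥T ⧸ A)) :=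
    Nat.card_pos_iff.mpr ⟨⟨⟨1, h1F⟩⟩, inferInstance⟩
  have hbig : 1 < Nat.card ↥(MulAction.fixedPoints G (↥T ⧸ A)) :=
    lt_of_lt_of_le hp.one_lt (Nat.le_of_dvd hpos hFdvd)
  haveI : Nontrivial ↥(MulAction.fixedPoints G (↥T ⧸ A)) :=
    Finite.one_lt_card_iff_nontrivial.mp hbig
  obtain ⟨q, hq⟩ := exists_ne (⟨1, h1F⟩ : ↥(MulAction.fixedPoints G (↥T ⧸ A)))
  obtain ⟨z, hz⟩ := QuotientGroup.mk'_surjective A (q : ↥T ⧸ A)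
  refine ⟨(z : G), z.2, ?_, ?_⟩
  · intro hzE
    apply hq
    have hzA : z ∈ A := by
      rw [hAdef, Subgroup.mem_subgroupOf]
      exact Subgroup.mem_inf.mpr ⟨hzE, z.2⟩
    apply Subtype.ext
    show (q : ↥T ⧸ A) = 1
    rw [← hz]
    exact (QuotientGroup.eq_one_iff z).mpr hzA
  · intro g
    have hfix := q.2 g
    rw [← hz] at hfix
    have hfix2 : QuotientGroup.mk (MulAut.conjNormal g z) = (QuotientGroup.mk z : ↥T ⧸ A) := by
      rw [← hsmul_mk]
      exact hfix
    have h2 := QuotientGroup.eq.mp hfix2.symm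
    rw [hAdef, Subgroup.mem_subgroupOf] at h2
    simpa using h2

end NormCoverAux

namespace NormCoverAux

variable {G : Type*} [Group G]

/-- Auxiliary subgroup: elements of `L` whose conjugation-differences by elements
of `S` lie in `H`. -/
def diffSub (H L : Subgroup G) (hHL : H ≤ L) (hLn : L.Normal)
    (habel : ∀ x ∈ L, ∀ y ∈ L, x * y = y * x) (S : Set G) : Subgroup G where
  carrier := {x | x ∈ L ∧ ∀ g ∈ S, x⁻¹ * (g * x * g⁻¹) ∈ H}
  one_mem' := ⟨L.one_mem, fun g _ => by simpa using H.one_mem⟩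
  mul_mem' := by
    rintro x y ⟨hxL, hx⟩ ⟨hyL, hy⟩
    refine ⟨L.mul_mem hxL hyL, fun g hg => ?_⟩
    have ha := hx g hg
    have hb := hy g hg
    have hid : (x * y)⁻¹ * (g * (x * y) * g⁻¹)
        = (y⁻¹ * (x⁻¹ * (g * x * g⁻¹)) * y) * (y⁻¹ * (g * y * g⁻¹)) := by group
    rw [hid]
    have hcomm : (x⁻¹ * (g * x * g⁻¹)) * y = y * (x⁻¹ * (g * x * g⁻¹)) :=
      habel _ (hHL ha) _ hyL
    have : y⁻¹ * (x⁻¹ * (g * x * g⁻¹)) * y = x⁻¹ * (g * x * g⁻¹) := by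
      rw [mul_assoc, hcomm, ← mul_assoc, inv_mul_cancel, one_mul]
    rw [this]
    exact H.mul_mem ha hb
  inv_mem' := by
    rintro x ⟨hxL, hx⟩
    refine ⟨L.inv_mem hxL, fun g hg => ?_⟩
    have ha := hx g hg
    have hid : x⁻¹⁻¹ * (g * x⁻¹ * g⁻¹) = x * (x⁻¹ * (g * x * g⁻¹))⁻¹ * x⁻¹ := by group
    rw [hid]
    have hcomm : (x⁻¹ * (g * x * g⁻¹))⁻¹ * x⁻¹ = x⁻¹ * (x⁻¹ * (g * x * g⁻¹))⁻¹ :=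
      habel _ (L.inv_mem (hHL ha)) _ (L.inv_mem hxL)
    rw [mul_assoc, hcomm, ← mul_assoc, mul_inv_cancel, one_mul]
    exact H.inv_mem ha

lemma mem_diffSub {H L : Subgroup G} {hHL : H ≤ L} {hLn : L.Normal}
    {habel : ∀ x ∈ L, ∀ y ∈ L, x * y = y * x} {S : Set G} {x : G} :
    x ∈ diffSub H L hHL hLn habel S ↔ x ∈ L ∧ ∀ g ∈ S, x⁻¹ * (g * x * g⁻¹) ∈ H :=
  Iff.rfl

end NormCoverAux

open NormCoverAux in
/-- Main auxiliary theorem: in a finite `p`-group, the normalizer of a non-normal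
subgroup is contained in a normalizer which is a coatom. -/
theorem NormCoverAux.main : ∀ (n : ℕ) {G : Type*} [Group G] [Finite G] {p : ℕ},
    p.Prime → IsPGroup p G → Nat.card G = n → ∀ {H : Subgroup G}, ¬ H.Normal →
    ∃ K : Subgroup G, normalizer (H : Set G) ≤ normalizer (K : Set G) ∧ IsCoatom (normalizer (K : Set G)) := by
  intro n
  induction n using Nat.strong_induction_on with
  | _ n IH =>
    intro G _ _ p hp hpG hcard H hH
    -- Quotient recursion step
    have hquot : ∀ N : Subgroup G, N.Normal → N ≠ ⊥ → ¬ (H ⊔ N).Normal →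
        ∃ K : Subgroup G, normalizer (H : Set G) ≤ normalizer (K : Set G) ∧ IsCoatom (normalizer (K : Set G)) := by
      intro N hN hNbot hHN
      haveI := hN
      have hπsurj : Function.Surjective (QuotientGroup.mk' N) := QuotientGroup.mk'_surjective N
      have hmapn : ¬ (H.map (QuotientGroup.mk' N)).Normal := by
        intro hmn
        have h2 := hmn.comap (QuotientGroup.mk' N)
        rw [Subgroup.comap_map_eq, QuotientGroup.ker_mk'] at h2
        exact hHN h2
      have hlt : Nat.card (G ⧸ N) < n := by
        have h1 : Nat.card G = Nat.card (G ⧸ N) * Nat.card N :=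
          Subgroup.card_eq_card_quotient_mul_card_subgroup N
        have h2 : 1 < Nat.card N := by
          haveI : Nontrivial ↥N := by
            rcases N.bot_or_nontrivial with h | h
            · exact absurd h hNbot
            · exact h
          exact Finite.one_lt_card_iff_nontrivial.mpr inferInstance
        have h3 : 0 < Nat.card (G ⧸ N) := Nat.card_pos
        rw [hcard] at h1
        nlinarith
      obtain ⟨K', hle', hco'⟩ := IH _ hlt hp (hpG.to_quotient N) rfl hmapn
      refine ⟨K'.comap (QuotientGroup.mk' N), ?_, ?_⟩
      · rw [normalizer_comap_surj hπsurj]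
        intro g hg
        refine Subgroup.mem_comap.mpr (hle' ?_)
        exact map_mem_normalizer (QuotientGroup.mk' N) hg
      · rw [normalizer_comap_surj hπsurj]
        exact isCoatom_comap hπsurj hco'
    by_cases hcore : H.normalCore = ⊥
    swap
    · refine hquot H.normalCore H.normalCore_normal hcore ?_
      rw [sup_eq_left.mpr H.normalCore_le]
      exact hH
    -- now H has trivial normal core; find central element of order p
    haveI : Nontrivial G := by
      rcases subsingleton_or_nontrivial G with hs | hs
      · refine absurd ?_ hH
        constructor
        intro x hx g
        rwa [Subsingleton.elim (g * x * g⁻¹) x]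
      · exact hs
    haveI := Fact.mk hp
    haveI hcnt : Nontrivial ↥(Subgroup.center G) := hpG.center_nontrivial
    have hpdvd : p ∣ Nat.card ↥(Subgroup.center G) := by
      obtain ⟨m, hm⟩ := IsPGroup.iff_card.mp (hpG.to_subgroup (Subgroup.center G))
      rw [hm]
      refine dvd_pow_self p ?_
      intro h0
      rw [h0, pow_zero] at hm
      exact (Finite.one_lt_card_iff_nontrivial.mpr hcnt).ne' hm
    obtain ⟨z', hz'⟩ := exists_prime_orderOf_dvd_card' p hpdvd
    have hzc : (z' : G) ∈ Subgroup.center G := z'.2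
    have hordz : orderOf (z' : G) = p := by rw [orderOf_coe]; exact hz'
    obtain ⟨N, hNdef⟩ : ∃ N : Subgroup G, N = Subgroup.zpowers (z' : G) := ⟨_, rfl⟩
    have hNn : N.Normal := by
      rw [hNdef]
      constructor
      intro x hx g
      have hcomm : Commute g x := by
        obtain ⟨k, hk⟩ := hx
        rw [← hk]
        have hcz : Commute g (z' : G) := Subgroup.mem_center_iff.mp hzc g
        exact hcz.zpow_right k
      rw [hcomm.eq, mul_assoc, mul_inv_cancel, mul_one]
      exact hx
    have hcardN : Nat.card ↥N = p := by rw [hNdef, Nat.card_zpowers, hordz]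
    have hNbot : N ≠ ⊥ := by
      intro h0
      rw [h0] at hcardN
      rw [Subgroup.card_bot] at hcardN
      exact hp.one_lt.ne hcardN
    by_cases hLn : (H ⊔ N).Normal
    swap
    · exact hquot N hNn hNbot hLn
    -- MAIN CONSTRUCTION
    obtain ⟨L, hLdef⟩ : ∃ L : Subgroup G, L = H ⊔ N := ⟨_, rfl⟩
    have hLnn : L.Normal := hLdef ▸ hLn
    have hHL : H ≤ L := hLdef ▸ le_sup_left
    have hNL : N ≤ L := hLdef ▸ le_sup_right
    have hNnotH : ¬ N ≤ H := by
      intro hNH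
      haveI := hNn
      have h1 : N ≤ H.normalCore := Subgroup.normal_le_normalCore.mpr hNH
      rw [hcore] at h1
      exact hNbot (le_bot_iff.mp h1)
    have hNinfH : N ⊓ H = ⊥ := by
      have hdvd : Nat.card ↥(N ⊓ H) ∣ p := by
        rw [← hcardN]
        exact Subgroup.card_dvd_of_le inf_le_left
      rcases hp.eq_one_or_self_of_dvd _ hdvd with h1 | h1
      · exact Subgroup.card_eq_one.mp h1
      · exfalso
        apply hNnotH
        -- N ⊓ H = N
        have t1 : ((N ⊓ H).subgroupOf N).index * Nat.card ↥((N ⊓ H).subgroupOf N)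
            = Nat.card ↥N := Subgroup.index_mul_card _
        have t2 : Nat.card ↥((N ⊓ H).subgroupOf N)
            = Nat.card ↥(N ⊓ H) :=
          Nat.card_congr (Subgroup.subgroupOfEquivOfLe inf_le_left).toEquiv
        rw [t2, h1, hcardN] at t1
        have hpos : 0 < p := hp.pos
        have t3 : ((N ⊓ H).subgroupOf N).index = 1 :=
          Nat.eq_of_mul_eq_mul_right hpos (t1.trans (one_mul p).symm)
        have t4 := Subgroup.index_eq_one.mp t3
        rw [Subgroup.subgroupOf_eq_top] at t4
        exact fun x hx => (t4 hx).2
    have hcardL : Nat.card ↥L = Nat.card ↥H * p := by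
      have t1 : (N.subgroupOf L).index * Nat.card ↥(N.subgroupOf L) = Nat.card ↥L :=
        Subgroup.index_mul_card _
      have t2 : Nat.card ↥(N.subgroupOf L) = p := by
        rw [Nat.card_congr (Subgroup.subgroupOfEquivOfLe hNL).toEquiv]
        exact hcardN
      have t4 : (N.subgroupOf L).index = Nat.card ↥H := by
        haveI := hNn
        have e1 : (N.subgroupOf L).index = N.relIndex L := rfl
        rw [e1, hLdef, Subgroup.relIndex_sup_right]
        have e2 : N.subgroupOf H = ⊥ :=
          Subgroup.subgroupOf_eq_bot.mpr (disjoint_iff.mpr hNinfH)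
        rw [Subgroup.relIndex, e2, Subgroup.index_bot]
      rw [t4, t2] at t1
      omega
    have hrelHL : H.relIndex L = p := by
      have t1 : (H.subgroupOf L).index * Nat.card ↥(H.subgroupOf L) = Nat.card ↥L :=
        Subgroup.index_mul_card _
      have t2 : Nat.card ↥(H.subgroupOf L) = Nat.card ↥H :=
        Nat.card_congr (Subgroup.subgroupOfEquivOfLe hHL).toEquiv
      rw [t2, hcardL] at t1
      have hHpos : 0 < Nat.card ↥H := Nat.card_pos
      have t3 : (H.subgroupOf L).index = p :=
        Nat.eq_of_mul_eq_mul_right hHpos (t1.trans (mul_comm _ _))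
      exact t3
    have hLnormH : L ≤ normalizer (H : Set G) := by
      rw [hLdef]
      refine sup_le Subgroup.le_normalizer ?_
      intro c hc
      have hcc : c ∈ Subgroup.center G := by
        rw [hNdef] at hc
        obtain ⟨k, hk⟩ := hc
        rw [← hk]
        exact Subgroup.zpow_mem _ hzc k
      rw [Subgroup.mem_normalizer_iff]
      intro h
      have he : c * h * c⁻¹ = h := by
        rw [← Subgroup.mem_center_iff.mp hcc h, mul_assoc, mul_inv_cancel, mul_one]
      rw [he]
    haveI hH'n : (H.subgroupOf L).Normal := by
      constructor
      intro x hx g'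
      rw [Subgroup.mem_subgroupOf] at hx ⊢
      exact (Subgroup.mem_normalizer_iff.mp (hLnormH g'.2) (x : G)).mp hx
    have hQLcard : Nat.card (↥L ⧸ H.subgroupOf L) = p := hrelHL
    have habel : ∀ x ∈ L, ∀ y ∈ L, x * y = y * x := by
      have hcomm : ∀ x' y' : ↥L, (x' : G)⁻¹ * (y' : G)⁻¹ * x' * y' ∈ H := by
        haveI : IsCyclic (↥L ⧸ H.subgroupOf L) := isCyclic_of_prime_card hQLcard
        letI := IsCyclic.commGroup (α := ↥L ⧸ H.subgroupOf L)
        intro x' y'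
        have h1 : (QuotientGroup.mk (y' * x') : ↥L ⧸ H.subgroupOf L)
            = QuotientGroup.mk (x' * y') := by
          rw [QuotientGroup.mk_mul, QuotientGroup.mk_mul, mul_comm]
        have h2 := QuotientGroup.eq.mp h1
        rw [Subgroup.mem_subgroupOf] at h2
        have h3 : (((y' * x')⁻¹ * (x' * y') : ↥L) : G)
            = (x' : G)⁻¹ * (y' : G)⁻¹ * x' * y' := by
          push_cast
          group
        rwa [h3] at h2
      intro x hx y hy
      have hw : ∀ b : G, b * (x⁻¹ * y⁻¹ * x * y) * b⁻¹ ∈ H := by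
        intro b
        have hid : b * (x⁻¹ * y⁻¹ * x * y) * b⁻¹
            = (b*x*b⁻¹)⁻¹ * (b*y*b⁻¹)⁻¹ * (b*x*b⁻¹) * (b*y*b⁻¹) := by group
        rw [hid]
        exact hcomm ⟨b*x*b⁻¹, hLnn.conj_mem x hx b⟩ ⟨b*y*b⁻¹, hLnn.conj_mem y hy b⟩
      have hw' : x⁻¹ * y⁻¹ * x * y ∈ H.normalCore := hw
      rw [hcore, Subgroup.mem_bot] at hw'
      calc x * y = (y * x) * (x⁻¹ * y⁻¹ * x * y) := by group
        _ = y * x := by rw [hw', mul_one]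
    obtain ⟨E, hEdef⟩ : ∃ E : Subgroup G, E = diffSub H L hHL hLnn habel Set.univ := ⟨_, rfl⟩
    have hmemE : ∀ x : G, x ∈ E ↔ (x ∈ L ∧ ∀ g : G, x⁻¹ * (g * x * g⁻¹) ∈ H) := by
      intro x
      rw [hEdef]
      constructor
      · rintro ⟨h1, h2⟩
        exact ⟨h1, fun g => h2 g (Set.mem_univ g)⟩
      · rintro ⟨h1, h2⟩
        exact ⟨h1, fun g _ => h2 g⟩
    have hEL : E ≤ L := fun x hx => ((hmemE x).mp hx).1
    have hEn : E.Normal := by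
      constructor
      intro x hx k
      rw [hmemE] at hx ⊢
      refine ⟨hLnn.conj_mem x hx.1 k, fun g => ?_⟩
      have h1 := hx.2 k
      have h2 := hx.2 (g * k)
      have hid : (k*x*k⁻¹)⁻¹ * (g * (k*x*k⁻¹) * g⁻¹)
          = (x⁻¹ * (k*x*k⁻¹))⁻¹ * (x⁻¹ * ((g*k)*x*(g*k)⁻¹)) := by group
      rw [hid]
      exact H.mul_mem (H.inv_mem h1) h2
    have hLE : ¬ L ≤ E := by
      intro hle'
      apply hH
      constructor
      intro h hh g
      have h1 := ((hmemE h).mp (hle' (hHL hh))).2 g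
      have h2 := H.mul_mem hh h1
      rwa [← mul_assoc, mul_inv_cancel, one_mul] at h2
    haveI : Finite (Subgroup G) :=
      Finite.of_injective (fun K : Subgroup G => (K : Set G)) SetLike.coe_injective
    obtain ⟨T, ⟨hTL, hTn, hTE⟩, hTmin⟩ :=
      (Finite.to_wellFoundedLT (α := Subgroup G)).wf.has_min
        {T : Subgroup G | T ≤ L ∧ T.Normal ∧ ¬ T ≤ E} ⟨L, le_rfl, hLnn, hLE⟩
    obtain ⟨x₀, hx₀T, hx₀E, hx₀d⟩ := exists_almost_fixed hp hpG hTn hEn hTE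
    have hdmem : ∀ g : G, x₀⁻¹ * (g * x₀ * g⁻¹) ∈ L := fun g =>
      L.mul_mem (L.inv_mem (hTL hx₀T)) (hLnn.conj_mem x₀ (hTL hx₀T) g)
    obtain ⟨lam, hlam⟩ : ∃ lam : G →* (↥L ⧸ H.subgroupOf L),
        ∀ g : G, lam g = QuotientGroup.mk (⟨x₀⁻¹ * (g * x₀ * g⁻¹), hdmem g⟩ : ↥L) := by
      refine ⟨{ toFun := fun g => QuotientGroup.mk (⟨x₀⁻¹ * (g * x₀ * g⁻¹), hdmem g⟩ : ↥L)
                map_one' := ?_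
                map_mul' := ?_ }, fun g => rfl⟩
      · refine (QuotientGroup.eq_one_iff _).mpr ?_
        rw [Subgroup.mem_subgroupOf]
        show x₀⁻¹ * (1 * x₀ * 1⁻¹) ∈ H
        simpa using H.one_mem
      · intro g h
        rw [← QuotientGroup.mk_mul, QuotientGroup.eq]
        rw [Subgroup.mem_subgroupOf]
        have hdhE : x₀⁻¹ * (h * x₀ * h⁻¹) ∈ E := (Subgroup.mem_inf.mp (hx₀d h)).1
        have hcond := ((hmemE _).mp hdhE).2 g
        have hco : (((⟨x₀⁻¹ * (g * h * x₀ * (g * h)⁻¹), hdmem (g*h)⟩ : ↥L)⁻¹ *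
            (⟨x₀⁻¹ * (g * x₀ * g⁻¹), hdmem g⟩ * ⟨x₀⁻¹ * (h * x₀ * h⁻¹), hdmem h⟩) : ↥L) : G)
            = ((x₀⁻¹ * (h * x₀ * h⁻¹))⁻¹ * (g * (x₀⁻¹ * (h * x₀ * h⁻¹)) * g⁻¹))⁻¹ := by
          push_cast
          group
        rw [hco]
        exact H.inv_mem hcond
    have hg₀ : ∃ g₀ : G, ¬ x₀⁻¹ * (g₀ * x₀ * g₀⁻¹) ∈ H := by
      by_contra hall
      push_neg at hall
      exact hx₀E ((hmemE x₀).mpr ⟨hTL hx₀T, hall⟩)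
    obtain ⟨g₀, hg₀⟩ := hg₀
    have hCindex : lam.ker.index = p := by
      rw [Subgroup.index_ker]
      have hdvd : Nat.card ↥lam.range ∣ p := by
        rw [← hQLcard]
        exact Subgroup.card_subgroup_dvd_card _
      rcases hp.eq_one_or_self_of_dvd _ hdvd with h1 | h1
      · exfalso
        have hbot : lam.range = ⊥ := Subgroup.card_eq_one.mp h1
        apply hg₀
        have hmem : lam g₀ ∈ lam.range := ⟨g₀, rfl⟩
        rw [hbot, Subgroup.mem_bot, hlam g₀, QuotientGroup.eq_one_iff,
          Subgroup.mem_subgroupOf] at hmem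
        exact hmem
      · exact h1
    have hHnormC : normalizer (H : Set G) ≤ lam.ker := by
      intro g hg
      have hgL : g ∈ normalizer (L : Set G) := by
        rw [normalizer_eq_top_iff.mpr hLnn]
        exact Subgroup.mem_top g
      obtain ⟨kk, hkk⟩ := hpG g
      have hc := conj_mem_of_relIndex_prime hp hHL habel hrelHL hkk hg hgL x₀ (hTL hx₀T)
      rw [MonoidHom.mem_ker, hlam g]
      refine (QuotientGroup.eq_one_iff _).mpr ?_
      rw [Subgroup.mem_subgroupOf]
      exact hc
    have hTeq : ((E ⊓ T) ⊔ Subgroup.closure {x₀}) = T := by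
      have hT₂T : ((E ⊓ T) ⊔ Subgroup.closure {x₀}) ≤ T :=
        sup_le inf_le_right ((Subgroup.closure_le T).mpr (by simpa using hx₀T))
      have hx₀T₂ : x₀ ∈ (E ⊓ T) ⊔ Subgroup.closure {x₀} :=
        Subgroup.mem_sup_right (Subgroup.subset_closure (Set.mem_singleton x₀))
      have hT₂E : ¬ ((E ⊓ T) ⊔ Subgroup.closure {x₀}) ≤ E := fun hc => hx₀E (hc hx₀T₂)
      have hT₂n : ((E ⊓ T) ⊔ Subgroup.closure {x₀}).Normal := by
        constructor
        intro x hx k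
        have hsub : ((E ⊓ T) ⊔ Subgroup.closure {x₀})
            ≤ Subgroup.comap (MulAut.conj k).toMonoidHom ((E ⊓ T) ⊔ Subgroup.closure {x₀}) := by
          refine sup_le ?_ ?_
          · intro y hy
            refine Subgroup.mem_comap.mpr (Subgroup.mem_sup_left ?_)
            have hy' := Subgroup.mem_inf.mp hy
            exact Subgroup.mem_inf.mpr ⟨hEn.conj_mem y hy'.1 k, hTn.conj_mem y hy'.2 k⟩
          · rw [Subgroup.closure_le]
            intro y hy
            rw [Set.mem_singleton_iff] at hy
            rw [hy]
            refine Subgroup.mem_comap.mpr ?_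
            have he : (MulAut.conj k).toMonoidHom x₀ = x₀ * (x₀⁻¹ * (k * x₀ * k⁻¹)) := by
              show k * x₀ * k⁻¹ = x₀ * (x₀⁻¹ * (k * x₀ * k⁻¹))
              group
            rw [he]
            exact Subgroup.mul_mem _ hx₀T₂ (Subgroup.mem_sup_left (hx₀d k))
        exact Subgroup.mem_comap.mp (hsub hx)
      by_contra hne
      exact hTmin _ ⟨le_trans hT₂T hTL, hT₂n, hT₂E⟩ (lt_of_le_of_ne hT₂T hne)
    have hker_d : ∀ g ∈ lam.ker, ∀ x ∈ T, x⁻¹ * (g * x * g⁻¹) ∈ H := by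
      intro g hg x hx
      have hDg : ((E ⊓ T) ⊔ Subgroup.closure {x₀}) ≤ diffSub H L hHL hLnn habel {g} := by
        refine sup_le ?_ ?_
        · intro y hy
          have hy' := ((hmemE y).mp (Subgroup.mem_inf.mp hy).1)
          exact ⟨hy'.1, fun g' _ => hy'.2 g'⟩
        · rw [Subgroup.closure_le]
          intro y hy
          rw [Set.mem_singleton_iff] at hy
          rw [hy]
          refine ⟨hTL hx₀T, fun g' hg' => ?_⟩
          rw [Set.mem_singleton_iff] at hg'
          rw [hg']
          have h1 : lam g = 1 := hg
          rw [hlam g, QuotientGroup.eq_one_iff, Subgroup.mem_subgroupOf] at h1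
          exact h1
      rw [hTeq] at hDg
      exact (hDg hx).2 g rfl
    obtain ⟨K, hKdef⟩ : ∃ K : Subgroup G, K = H ⊓ T := ⟨_, rfl⟩
    have hconj : ∀ g ∈ lam.ker, ∀ h, h ∈ H ⊓ T → g * h * g⁻¹ ∈ H ⊓ T := by
      intro g hg h hh
      have hh' := Subgroup.mem_inf.mp hh
      refine Subgroup.mem_inf.mpr ⟨?_, hTn.conj_mem h hh'.2 g⟩
      have h1 := hker_d g hg h hh'.2
      have h2 := H.mul_mem hh'.1 h1
      rwa [← mul_assoc, mul_inv_cancel, one_mul] at h2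
    have hCnormK : lam.ker ≤ normalizer (K : Set G) := by
      intro g hg
      rw [Subgroup.mem_normalizer_iff]
      intro h
      constructor
      · intro hh
        rw [hKdef] at hh ⊢
        exact hconj g hg h hh
      · intro hh
        rw [hKdef] at hh ⊢
        have h2 := hconj g⁻¹ (lam.ker.inv_mem hg) _ hh
        have he : g⁻¹ * (g * h * g⁻¹) * g⁻¹⁻¹ = h := by group
        rwa [he] at h2
    have hTnotH : ¬ T ≤ H := by
      intro hTH
      apply hTE
      intro x hx
      refine (hmemE x).mpr ⟨hTL hx, fun g => ?_⟩
      exact H.mul_mem (H.inv_mem (hTH hx)) (hTH (hTn.conj_mem x hx g))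
    have hKnn : ¬ K.Normal := by
      intro hKn
      have hKne : K ≠ T := by
        intro he
        apply hTnotH
        intro x hx
        rw [hKdef] at he
        rw [← he] at hx
        exact hx.1
      have hKltT : K < T := lt_of_le_of_ne (hKdef ▸ inf_le_right) hKne
      have hKE : K ≤ E := by
        by_contra hKE
        exact hTmin K ⟨le_trans hKltT.le hTL, hKn, hKE⟩ hKltT
      have hrelKT : K.relIndex T = p := by
        rw [hKdef]
        have h1 : (H ⊓ T).relIndex T = H.relIndex T := by
          rw [Subgroup.relIndex, Subgroup.relIndex, Subgroup.inf_subgroupOf_right]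
        rw [h1]
        have h2 : H.relIndex T = (H.subgroupOf L).relIndex (T.subgroupOf L) :=
          (Subgroup.relIndex_subgroupOf hTL).symm
        have h3 : (H.subgroupOf L).relIndex (T.subgroupOf L) ∣ (H.subgroupOf L).index :=
          Subgroup.relIndex_dvd_index_of_normal _ _
        have h4 : (H.subgroupOf L).index = p := hrelHL
        rw [h4] at h3
        rcases hp.eq_one_or_self_of_dvd _ h3 with h5 | h5
        · exfalso
          rw [← h2] at h5
          exact hTnotH (Subgroup.relIndex_eq_one.mp h5)
        · rw [h2]
          exact h5
      apply hTE
      intro x hx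
      refine (hmemE x).mpr ⟨hTL hx, fun g => ?_⟩
      obtain ⟨kk, hkk⟩ := hpG g
      have habelT : ∀ a ∈ T, ∀ b ∈ T, a * b = b * a := fun a ha b hb =>
        habel a (hTL ha) b (hTL hb)
      have hc := conj_mem_of_relIndex_prime hp (hKdef ▸ inf_le_right) habelT hrelKT hkk
        (by rw [normalizer_eq_top_iff.mpr hKn]; exact Subgroup.mem_top g)
        (by rw [normalizer_eq_top_iff.mpr hTn]; exact Subgroup.mem_top g) x hx
      rw [hKdef] at hc
      exact (Subgroup.mem_inf.mp hc).1
    have hKtop : normalizer (K : Set G) ≠ ⊤ := fun h => hKnn (normalizer_eq_top_iff.mp h)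
    have hCcoatom : IsCoatom lam.ker := isCoatom_of_index_prime hp hCindex
    have hKer_eq : normalizer (K : Set G) = lam.ker := by
      rcases eq_or_lt_of_le hCnormK with h | h
      · exact h.symm
      · exact absurd (hCcoatom.2 _ h) hKtop
    refine ⟨K, ?_, ?_⟩
    · rw [hKer_eq]
      exact hHnormC
    · rw [hKer_eq]
      exact hCcoatom

theorem stmt10 {G : Type*} [Group G] [Finite G] {p : ℕ} (hp : p.Prime)
    (hpG : IsPGroup p G) (hna : ¬ ∀ a b : G, a * b = b * a)
    (hcov : ∃ s : Finset (Subgroup G), IsNormCover s) :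
    ∀ u : G, ∃ H : Subgroup G, u ∈ normalizer (H : Set G) ∧ IsCoatom (normalizer (H : Set G)) := by
  intro u
  obtain ⟨s, hs1, hs2⟩ := hcov
  obtain ⟨H, hHs, hu⟩ := hs2 u
  obtain ⟨K, hle, hco⟩ := NormCoverAux.main (Nat.card G) hp hpG rfl (hs1 H hHs)
  exact ⟨K, hle hu, hco⟩
end
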